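/- (Negativity of the untilted Euler-factor covariance: φ(0) < 0 in the fixed-p barrier argument.) For every t ∈ (0,1), under the untilted semicircle weight the covariance of log h_t(x) and x² is strictly negative: Cov^t_0(log h_t, x²) = E^t_0[Real.log(h_t(x))·x²] − E^t_0[Real.log(h_t(x))]·E^t_0[x²] < 0, where h_t(x) = 1 − 2·t·x + t². -/

import Mathlib

/-!
The semicircle weight and `x²` are even, so `log h_t` may be replaced by its even part
`φ(x²)`, where `φ(s) = ½ log((1 + t²)² − 4t²s)` is strictly decreasing on `[0, 1]`.
With `c = E[x²] ∈ [0, 1]` the covariance is `E[(φ(x²) − φ(c))(x² − c)]`, whose integrand is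
nonpositive on `[-1, 1]` and negative wherever `x² ≠ c`.
-/

open intervalIntegral

/-- The Euler-factor polynomial `h_t(x) = 1 − 2tx + t²`. -/
noncomputable def eulerH (t x : ℝ) : ℝ := 1 - 2 * t * x + t ^ 2

/-- The Euler-factor tilted weight `u_{t,λ}(x) = √(1 − x²)·h_t(x)^{−λ}` on `[-1,1]`. -/
noncomputable def eulerW (t lam x : ℝ) : ℝ := Real.sqrt (1 - x ^ 2) * eulerH t x ^ (-lam)

/-- The normalization constant `Z_t(λ)`. -/
noncomputable def eulerZ (t lam : ℝ) : ℝ := ∫ x in (-1 : ℝ)..1, eulerW t lam x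

/-- The mean `E^t_λ[f]` under the Euler-factor tilted semicircle measure. -/
noncomputable def eulerE (t lam : ℝ) (f : ℝ → ℝ) : ℝ :=
  (eulerZ t lam)⁻¹ * ∫ x in (-1 : ℝ)..1, f x * eulerW t lam x

/-- The covariance `Cov^t_λ(f, g)` under the Euler-factor tilted semicircle measure. -/
noncomputable def eulerCov (t lam : ℝ) (f g : ℝ → ℝ) : ℝ :=
  eulerE t lam (fun x => f x * g x) - eulerE t lam f * eulerE t lam g

open MeasureTheory Set Real

section StrictAntiOn

variable {R : Type*} [Ring R] [LinearOrder R] [IsStrictOrderedRing R] {φ : R → R} {s : Set R}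
  {a b : R}

theorem StrictAntiOn.sub_mul_sub_neg (hφ : StrictAntiOn φ s) (ha : a ∈ s) (hb : b ∈ s)
    (hab : a ≠ b) : (φ a - φ b) * (a - b) < 0 := by
  rcases hab.lt_or_gt with h | h
  · exact mul_neg_of_pos_of_neg (sub_pos.2 (hφ ha hb h)) (sub_neg.2 h)
  · exact mul_neg_of_neg_of_pos (sub_neg.2 (hφ hb ha h)) (sub_pos.2 h)

theorem StrictAntiOn.sub_mul_sub_nonpos (hφ : StrictAntiOn φ s) (ha : a ∈ s) (hb : b ∈ s) :
    (φ a - φ b) * (a - b) ≤ 0 := by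
  rcases eq_or_ne a b with rfl | hab
  · simp
  · exact (hφ.sub_mul_sub_neg ha hb hab).le

end StrictAntiOn

theorem integral_mul_even_eq_integral_evenPart_mul {a : ℝ} {f m : ℝ → ℝ}
    (hm : ∀ x, m (-x) = m x) (hfm : IntervalIntegrable (fun x => f x * m x) volume (-a) a) :
    ∫ x in (-a)..a, f x * m x = ∫ x in (-a)..a, (f x + f (-x)) / 2 * m x := by
  have hfm_neg : IntervalIntegrable (fun x => f (-x) * m x) volume (-a) a := by
    simpa [hm] using ((IntervalIntegrable.iff_comp_neg (f := fun x => f x * m x)).1 hfm).symm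
  have h_reflect : ∫ x in (-a)..a, f (-x) * m x = ∫ x in (-a)..a, f x * m x := by
    simpa [hm] using intervalIntegral.integral_comp_neg (fun x => f x * m x) (a := -a) (b := a)
  calc ∫ x in (-a)..a, f x * m x
      = ((∫ x in (-a)..a, f x * m x) + ∫ x in (-a)..a, f (-x) * m x) / 2 := by
        rw [h_reflect]; ring
    _ = ∫ x in (-a)..a, (f x + f (-x)) / 2 * m x := by
        rw [← intervalIntegral.integral_add hfm hfm_neg, ← intervalIntegral.integral_div]
        congr 1 with x
        ring

section Covariance

variable {t lam : ℝ} {f g : ℝ → ℝ}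

theorem eulerCov_eq_integral_sub_mul_sub (hZ : eulerZ t lam ≠ 0) (k : ℝ)
    (hu : IntervalIntegrable (eulerW t lam) volume (-1) 1)
    (hf : IntervalIntegrable (fun x => f x * eulerW t lam x) volume (-1) 1)
    (hg : IntervalIntegrable (fun x => g x * eulerW t lam x) volume (-1) 1)
    (hfg : IntervalIntegrable (fun x => f x * g x * eulerW t lam x) volume (-1) 1) :
    eulerCov t lam f g = (eulerZ t lam)⁻¹ *
      ∫ x in (-1 : ℝ)..1, (f x - k) * (g x - eulerE t lam g) * eulerW t lam x := by
  have hexpand : ∫ x in (-1 : ℝ)..1, (f x - k) * (g x - eulerE t lam g) * eulerW t lam x =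
      (∫ x in (-1 : ℝ)..1, f x * g x * eulerW t lam x)
        - eulerE t lam g * (∫ x in (-1 : ℝ)..1, f x * eulerW t lam x)
        - k * (∫ x in (-1 : ℝ)..1, g x * eulerW t lam x) + k * eulerE t lam g * eulerZ t lam := by
    rw [eulerZ, ← intervalIntegral.integral_const_mul, ← intervalIntegral.integral_const_mul,
      ← intervalIntegral.integral_const_mul, ← intervalIntegral.integral_sub hfg (hf.const_mul _),
      ← intervalIntegral.integral_sub (hfg.sub (hf.const_mul _)) (hg.const_mul k),
      ← intervalIntegral.integral_add ((hfg.sub (hf.const_mul _)).sub (hg.const_mul k))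
        (hu.const_mul _)]
    congr 1 with x
    ring
  rw [hexpand, eulerCov]
  simp only [eulerE]
  field_simp
  ring

end Covariance

section Semicircle

variable {t : ℝ} {f g : ℝ → ℝ}

@[simp]
theorem eulerW_zero (t x : ℝ) : eulerW t 0 x = √(1 - x ^ 2) := by
  simp [eulerW]

theorem eulerZ_zero (t : ℝ) : eulerZ t 0 = π / 2 := by
  simpa [eulerZ] using integral_sqrt_one_sub_sq

theorem intervalIntegrable_eulerW_zero (t : ℝ) :
    IntervalIntegrable (eulerW t 0) volume (-1) 1 := by
  rw [show eulerW t 0 = fun x => √(1 - x ^ 2) from funext (eulerW_zero t)]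
  exact (by fun_prop : Continuous fun x : ℝ => √(1 - x ^ 2)).intervalIntegrable _ _

theorem intervalIntegrable_mul_eulerW_zero (hf : ContinuousOn f (Icc (-1) 1)) :
    IntervalIntegrable (fun x => f x * eulerW t 0 x) volume (-1) 1 := by
  simp only [eulerW_zero]
  exact (hf.mul (by fun_prop)).intervalIntegrable_of_Icc (by norm_num)

theorem eulerE_zero_evenPart
    (hf : IntervalIntegrable (fun x => f x * eulerW t 0 x) volume (-1) 1) :
    eulerE t 0 f = eulerE t 0 (fun x => (f x + f (-x)) / 2) := by
  rw [eulerE, eulerE, integral_mul_even_eq_integral_evenPart_mul (by simp) hf]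

theorem eulerCov_zero_evenPart (hg : ∀ x, g (-x) = g x)
    (hf : IntervalIntegrable (fun x => f x * eulerW t 0 x) volume (-1) 1)
    (hfg : IntervalIntegrable (fun x => f x * g x * eulerW t 0 x) volume (-1) 1) :
    eulerCov t 0 f g = eulerCov t 0 (fun x => (f x + f (-x)) / 2) g := by
  rw [eulerCov, eulerCov, eulerE_zero_evenPart hf, eulerE_zero_evenPart hfg]
  congr 2 with x
  rw [hg]
  ring

theorem eulerE_zero_sq_mem_Icc (t : ℝ) : eulerE t 0 (· ^ 2) ∈ Icc 0 1 := by
  have hZ : 0 < eulerZ t 0 := by rw [eulerZ_zero]; positivity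
  have hmono : ∫ x in (-1 : ℝ)..1, x ^ 2 * eulerW t 0 x ≤ eulerZ t 0 := by
    simp only [eulerZ, eulerW_zero]
    refine intervalIntegral.integral_mono_on (by norm_num)
      ((by fun_prop : Continuous _).intervalIntegrable _ _)
      ((by fun_prop : Continuous _).intervalIntegrable _ _) fun x hx => ?_
    have : x ^ 2 ≤ 1 := by nlinarith [hx.1, hx.2]
    exact mul_le_of_le_one_left (sqrt_nonneg _) this
  rw [eulerE, ← div_eq_inv_mul]
  refine ⟨div_nonneg (intervalIntegral.integral_nonneg (by norm_num) fun x _ => ?_) hZ.le,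
    (div_le_one hZ).2 hmono⟩
  rw [eulerW_zero]
  positivity

theorem integral_sub_mul_sub_sq_mul_sqrt_neg {φ : ℝ → ℝ} (hφ : StrictAntiOn φ (Icc 0 1))
    (hφc : ContinuousOn φ (Icc 0 1)) {c : ℝ} (hc : c ∈ Icc 0 1) :
    ∫ x in (-1 : ℝ)..1, (φ (x ^ 2) - φ c) * (x ^ 2 - c) * √(1 - x ^ 2) < 0 := by
  have hsq : MapsTo (· ^ 2) (Icc (-1 : ℝ) 1) (Icc 0 1) := fun x hx =>
    ⟨sq_nonneg x, by nlinarith [hx.1, hx.2]⟩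
  obtain ⟨x₀, hx₀, hx₀c⟩ : ∃ x₀ ∈ Ioo (-1 : ℝ) 1, x₀ ^ 2 ≠ c := by
    rcases eq_or_ne c 0 with rfl | hc0
    · exact ⟨1 / 2, by norm_num, by norm_num⟩
    · exact ⟨0, by norm_num, by simpa using hc0.symm⟩
  rw [← neg_pos, ← intervalIntegral.integral_neg]
  refine intervalIntegral.integral_pos (by norm_num) ?_ (fun x hx => ?_)
    ⟨x₀, Ioo_subset_Icc_self hx₀, ?_⟩
  · exact ((((hφc.comp (by fun_prop) hsq).sub continuousOn_const).mul (by fun_prop)).mul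
      (by fun_prop)).neg
  · exact neg_nonneg.2 (mul_nonpos_of_nonpos_of_nonneg
      (hφ.sub_mul_sub_nonpos (hsq (Ioc_subset_Icc_self hx)) hc) (sqrt_nonneg _))
  · refine neg_pos.2 (mul_neg_of_neg_of_pos
      (hφ.sub_mul_sub_neg (hsq (Ioo_subset_Icc_self hx₀)) hc hx₀c) (sqrt_pos.2 ?_))
    nlinarith [hx₀.1, hx₀.2]

end Semicircle

section EulerFactor

variable {t : ℝ}

theorem eulerH_pos (ht : |t| < 1) {x : ℝ} (hx : x ∈ Icc (-1) 1) : 0 < eulerH t x := by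
  have htx : t * x ≤ |t| := (le_abs_self _).trans <| by
    rw [abs_mul]; exact mul_le_of_le_one_right (abs_nonneg t) (abs_le.2 hx)
  unfold eulerH
  nlinarith [sq_abs t, mul_pos (sub_pos.2 ht) (sub_pos.2 ht)]

theorem continuousOn_log_eulerH (ht : |t| < 1) :
    ContinuousOn (fun x => log (eulerH t x)) (Icc (-1) 1) :=
  (by unfold eulerH; fun_prop : Continuous (eulerH t)).continuousOn.log fun x hx =>
    (eulerH_pos ht hx).ne'

noncomputable def evenLogEulerH (t s : ℝ) : ℝ := log ((1 + t ^ 2) ^ 2 - 4 * t ^ 2 * s) / 2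

theorem evenLogEulerH_arg_pos (ht : |t| < 1) {s : ℝ} (hs : s ≤ 1) :
    0 < (1 + t ^ 2) ^ 2 - 4 * t ^ 2 * s := by
  have ht2 : t ^ 2 < 1 := by simpa using sq_lt_one_iff_abs_lt_one t |>.2 ht
  nlinarith [mul_le_mul_of_nonneg_left hs (sq_nonneg t), mul_pos (sub_pos.2 ht2) (sub_pos.2 ht2)]

theorem log_eulerH_evenPart (ht : |t| < 1) {x : ℝ} (hx : x ∈ Icc (-1) 1) :
    (log (eulerH t x) + log (eulerH t (-x))) / 2 = evenLogEulerH t (x ^ 2) := by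
  have hnx : -x ∈ Icc (-1 : ℝ) 1 := neg_mem_Icc_iff.2 (by rwa [neg_neg])
  rw [← log_mul (eulerH_pos ht hx).ne' (eulerH_pos ht hnx).ne', evenLogEulerH, eulerH, eulerH]
  ring_nf

theorem strictAntiOn_evenLogEulerH (ht0 : t ≠ 0) (ht : |t| < 1) :
    StrictAntiOn (evenLogEulerH t) (Icc 0 1) := fun a _ b hb hab => by
  unfold evenLogEulerH
  gcongr
  exact evenLogEulerH_arg_pos ht hb.2

theorem continuousOn_evenLogEulerH (ht : |t| < 1) : ContinuousOn (evenLogEulerH t) (Icc 0 1) :=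
  ((by fun_prop : Continuous fun s => (1 + t ^ 2) ^ 2 - 4 * t ^ 2 * s).continuousOn.log
    fun _ hs => (evenLogEulerH_arg_pos ht hs.2).ne').div_const 2

end EulerFactor

/-- Negativity of the untilted Euler-factor covariance: for every `t ∈ (0,1)`,
`Cov^t_0(log h_t, x²) < 0` under the untilted semicircle weight. -/
theorem eulerCov_log_xsq_neg_at_zero (t : ℝ) (ht0 : 0 < t) (ht1 : t < 1) :
    eulerCov t 0 (fun x => Real.log (eulerH t x)) (fun x => x ^ 2) < 0 := by
  have ht : |t| < 1 := abs_lt.2 ⟨by linarith, ht1⟩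
  have hZ : 0 < eulerZ t 0 := by rw [eulerZ_zero]; positivity
  have hlog := continuousOn_log_eulerH ht
  have hsq : ContinuousOn (fun x : ℝ => x ^ 2) (Icc (-1) 1) := by fun_prop
  have heven :
      ContinuousOn (fun x => (log (eulerH t x) + log (eulerH t (-x))) / 2) (Icc (-1) 1) :=
    (hlog.add (hlog.comp continuousOn_neg fun x hx =>
      neg_mem_Icc_iff.2 (by rwa [neg_neg]))).div_const 2
  rw [eulerCov_zero_evenPart (fun x => neg_sq x) (intervalIntegrable_mul_eulerW_zero hlog)
      (intervalIntegrable_mul_eulerW_zero (hlog.mul hsq)),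
    eulerCov_eq_integral_sub_mul_sub hZ.ne' (evenLogEulerH t (eulerE t 0 (· ^ 2)))
      (intervalIntegrable_eulerW_zero t)
      (intervalIntegrable_mul_eulerW_zero heven) (intervalIntegrable_mul_eulerW_zero hsq)
      (intervalIntegrable_mul_eulerW_zero (heven.mul hsq))]
  refine mul_neg_of_pos_of_neg (inv_pos.2 hZ) ?_
  set c := eulerE t 0 (· ^ 2)
  have hintegrand : EqOn
      (fun x => ((log (eulerH t x) + log (eulerH t (-x))) / 2 - evenLogEulerH t c) * (x ^ 2 - c)
        * eulerW t 0 x)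
      (fun x => (evenLogEulerH t (x ^ 2) - evenLogEulerH t c) * (x ^ 2 - c) * √(1 - x ^ 2))
      (uIcc (-1) 1) := fun x hx => by
    rw [uIcc_of_le (by norm_num)] at hx
    simp only [eulerW_zero, log_eulerH_evenPart ht hx]
  rw [intervalIntegral.integral_congr hintegrand]
  exact integral_sub_mul_sub_sq_mul_sqrt_neg (strictAntiOn_evenLogEulerH ht0.ne' ht)
    (continuousOn_evenLogEulerH ht) (eulerE_zero_sq_mem_Icc t)
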